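/- For every integer Δ ≥ 29, every orientation of every connected finite simple graph with maximum degree at most Δ has oriented chromatic number at most (Δ−3)·(Δ−1)·2^Δ + 2. -/

import Mathlib

/-- An oriented graph: a loopless directed graph without opposite arcs. -/
structure OrientedGraph (V : Type*) where
  adj : V → V → Prop
  irrefl' : ∀ v, ¬ adj v v
  asymm' : ∀ u v, adj u v → ¬ adj v u

namespace OrientedGraph

variable {V W : Type*}

/-- Pushing a set `S` of vertices reverses every arc with exactly one endpoint in `S`. -/
def push (G : OrientedGraph V) (S : Set V) : OrientedGraph V where
  adj u v := ((u ∈ S ↔ v ∈ S) ∧ G.adj u v) ∨ (¬(u ∈ S ↔ v ∈ S) ∧ G.adj v u)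
  irrefl' v := by
    rintro (⟨_, h⟩ | ⟨h, _⟩)
    · exact G.irrefl' v h
    · exact h Iff.rfl
  asymm' u v := by
    rintro (⟨h1, h2⟩ | ⟨h1, h2⟩) (⟨h3, h4⟩ | ⟨h3, h4⟩)
    · exact G.asymm' u v h2 h4
    · exact h3 h1.symm
    · exact h1 h3.symm
    · exact G.asymm' v u h2 h4

/-- A homomorphism of oriented graphs. -/
def IsHom (G : OrientedGraph V) (H : OrientedGraph W) (f : V → W) : Prop :=
  ∀ u v, G.adj u v → H.adj (f u) (f v)

/-- A pushable homomorphism: a homomorphism from some graph obtained from `G`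
by pushing a set of vertices. -/
def IsPushableHom (G : OrientedGraph V) (H : OrientedGraph W) (f : V → W) : Prop :=
  ∃ S : Set V, IsHom (G.push S) H f

/-- The underlying (simple) undirected graph of an oriented graph. -/
def toSimpleGraph (G : OrientedGraph V) : SimpleGraph V where
  Adj u v := G.adj u v ∨ G.adj v u
  symm := ⟨fun _ _ h => Or.symm h⟩
  loopless := ⟨fun v h => h.elim (G.irrefl' v) (G.irrefl' v)⟩

/-- The oriented chromatic number: the least order of an oriented graph that `G`
admits a homomorphism to. -/
noncomputable def orientedChromatic (G : OrientedGraph V) : ℕ :=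
  sInf {n | ∃ (H : OrientedGraph (Fin n)) (f : V → Fin n), IsHom G H f}

/-- The pushable chromatic number: the least order of an oriented graph that `G`
admits a pushable homomorphism to. -/
noncomputable def pushableChromatic (G : OrientedGraph V) : ℕ :=
  sInf {n | ∃ (H : OrientedGraph (Fin n)) (f : V → Fin n), IsPushableHom G H f}

/-- `signedAdj C true u w` means `w ∈ N⁺(u)`; `signedAdj C false u w` means `w ∈ N⁻(u)`. -/
def signedAdj (C : OrientedGraph V) : Bool → V → V → Prop
  | true, u, w => C.adj u w
  | false, u, w => C.adj w u

/-- The `s`-neighborhood of a set of vertices. -/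
def signedNbhd (C : OrientedGraph V) (s : Bool) (S : Set V) : Set V :=
  {w | ∃ u ∈ S, C.signedAdj s u w}

/-- The set `N^a(J)` for a sign vector `a` and a tuple `v` of vertices. -/
def NSet (C : OrientedGraph V) {j : ℕ} (a : Fin j → Bool) (v : Fin j → V) : Set V :=
  {w | (∀ i, C.signedAdj (a i) (v i) w) ∨ (∀ i, C.signedAdj (!(a i)) (v i) w)}

/-- Property `P(j,k)`: for every sign vector `a ∈ {+,-}^j` and every set of `j`
distinct vertices, `|N^a(J)| ≥ k`. -/
def HasPropP (C : OrientedGraph V) (j k : ℕ) : Prop :=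
  ∀ (a : Fin j → Bool) (v : Fin j → V), Function.Injective v → k ≤ (C.NSet a v).ncard

end OrientedGraph

/-- The Paley tournament on `ZMod 7`: `ij` is an arc iff `j - i ∈ {1, 2, 4}`. -/
def Pal7 : OrientedGraph (ZMod 7) where
  adj i j := j - i = 1 ∨ j - i = 2 ∨ j - i = 4
  irrefl' := by decide
  asymm' := by decide

/-- `mad(G) < 3`: every nonempty subgraph `H` satisfies `2|E(H)|/|V(H)| < 3`. -/
def MadLT3 {V : Type*} (G : SimpleGraph V) : Prop :=
  ∀ H : G.Subgraph, H.verts.Nonempty → 2 * H.edgeSet.ncard < 3 * H.verts.ncard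

/-- Degeneracy at most `d`: every nonempty set of vertices contains a vertex with
at most `d` neighbors inside the set. -/
def DegeneracyLE {V : Type*} (G : SimpleGraph V) (d : ℕ) : Prop :=
  ∀ s : Set V, s.Nonempty → ∃ v ∈ s, (s ∩ G.neighborSet v).ncard ≤ d

/-!
Take a tournament `T` on `m = (Δ - 3)(Δ - 1)2^(Δ - 1)` vertices such that for every set `s` of
`j ≤ Δ` vertices and every sign pattern `b` on `s`, more than `(Δ - j)(Δ - 1)` vertices `c` are
uniform for `(s, b)`: the arcs between `s` and `c` all follow `b`, or all follow its reverse. A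
random tournament works: by the union bound the number of bad tournaments is at most
`∑ⱼ C(m, j) 2^j C(m - j, K) (1 - 2^(1 - j))^(m - j - K) · 2^(m²)` with `K = (Δ - j)(Δ - 1)`, and
each summand is below `2^(m²) / (2Δ)` once `Δ ≥ 29`.

Colour `G` greedily with the vertices of `T`, pushing the new vertex when needed. Its coloured
neighbours carry distinct colours `s`, the directions of its arcs to them give `b`, and at most
`(Δ - j)(Δ - 1)` colours are used at distance two through its uncoloured neighbours; any other
uniform vertex is a valid colour and keeps the colouring injective on neighbourhoods. This gives
a pushable homomorphism `G → T`, and the antitwinned graph of `T`, on `2m` vertices, turns it into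
an oriented colouring.
-/

open Finset
open scoped Nat Classical

namespace OrientedGraph

variable {V W α : Type*}

def comap (f : V → W) (H : OrientedGraph W) : OrientedGraph V where
  adj u v := H.adj (f u) (f v)
  irrefl' v := H.irrefl' (f v)
  asymm' u v := H.asymm' (f u) (f v)

@[ext]
theorem ext {G H : OrientedGraph V} (h : ∀ u v, G.adj u v ↔ H.adj u v) : G = H := by
  cases G; cases H; congr; funext u v; exact propext (h u v)

@[simp]
theorem push_push (G : OrientedGraph V) (S : Set V) : (G.push S).push S = G := by
  ext u v
  simp only [push]
  tauto

theorem IsHom.push {G : OrientedGraph V} {H : OrientedGraph W} {f : V → W} (hf : IsHom G H f)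
    (S : Set W) : IsHom (G.push (f ⁻¹' S)) (H.push S) f := by
  rintro u v (⟨huv, h⟩ | ⟨huv, h⟩)
  · exact Or.inl ⟨huv, hf u v h⟩
  · exact Or.inr ⟨huv, hf v u h⟩

theorem push_adj_congr (G : OrientedGraph V) {S S' : Set V} {u w : V} (hu : u ∈ S ↔ u ∈ S')
    (hw : w ∈ S ↔ w ∈ S') : (G.push S).adj u w ↔ (G.push S').adj u w := by
  simp only [push, hu, hw]

theorem signedAdj_push {G : OrientedGraph V} (S : Set V) {u w : V}
    (h : G.toSimpleGraph.Adj u w) :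
    (G.push S).signedAdj (decide ((u ∈ S ↔ w ∈ S) ↔ G.adj u w)) u w := by
  rcases h with h | h <;> by_cases hS : u ∈ S ↔ w ∈ S <;>
    simp [signedAdj, push, hS, h, G.asymm' _ _ h, Iff.comm (a := w ∈ S)]

theorem adj_of_signedAdj {G : OrientedGraph V} {H : OrientedGraph W} {β : Bool} {u w : V}
    {x y : W} (hG : G.signedAdj β u w) (hH : H.signedAdj β x y) :
    (G.adj u w → H.adj x y) ∧ (G.adj w u → H.adj y x) := by
  cases β
  · exact ⟨fun h => (G.asymm' _ _ h hG).elim, fun _ => hH⟩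
  · exact ⟨fun _ => hH, fun h => (G.asymm' _ _ h hG).elim⟩

theorem toSimpleGraph_push (G : OrientedGraph V) (S : Set V) :
    (G.push S).toSimpleGraph = G.toSimpleGraph := by
  ext u w
  simp only [toSimpleGraph, push]
  tauto

/-- Two copies of `H`, with the arcs between different copies reversed. -/
def antitwin (H : OrientedGraph W) : OrientedGraph (W × Bool) :=
  (H.comap Prod.fst).push {p | p.2}

theorem IsPushableHom.exists_isHom_antitwin {G : OrientedGraph V} {H : OrientedGraph W}
    {f : V → W} (hf : IsPushableHom G H f) : ∃ g : V → W × Bool, IsHom G H.antitwin g := by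
  obtain ⟨S, hS⟩ := hf
  let g : V → W × Bool := fun v => (f v, decide (v ∈ S))
  have hg : IsHom (G.push S) (H.comap Prod.fst) g := hS
  have hpre : g ⁻¹' {p | p.2} = S := by ext v; simp [g]
  refine ⟨g, ?_⟩
  simpa [hpre, antitwin] using hg.push {p | p.2}

theorem orientedChromatic_le_card [Fintype W] {G : OrientedGraph V} {H : OrientedGraph W}
    {f : V → W} (hf : IsHom G H f) : G.orientedChromatic ≤ Fintype.card W := by
  let e := Fintype.equivFin W
  refine Nat.sInf_le ⟨H.comap e.symm, e ∘ f, fun u v huv => ?_⟩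
  simpa [comap] using hf u v huv

theorem IsPushableHom.orientedChromatic_le [Fintype W] {G : OrientedGraph V}
    {H : OrientedGraph W} {f : V → W} (hf : IsPushableHom G H f) :
    G.orientedChromatic ≤ 2 * Fintype.card W := by
  obtain ⟨g, hg⟩ := hf.exists_isHom_antitwin
  simpa [mul_comm] using orientedChromatic_le_card hg

section

variable [Fintype α]

/-- `NSet b v` for an enumeration `v` of `s`. -/
noncomputable def uniformNbhd (T : OrientedGraph α) (s : Finset α) (b : α → Bool) : Finset α :=
  {c | (∀ a ∈ s, T.signedAdj (b a) a c) ∨ ∀ a ∈ s, T.signedAdj (!b a) a c}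

def HasLargeUniformNbhds (T : OrientedGraph α) (Δ : ℕ) (k : ℕ → ℕ) : Prop :=
  ∀ (s : Finset α) (b : α → Bool), #s ≤ Δ → k #s < #(T.uniformNbhd s b)

theorem uniformNbhd_congr {T : OrientedGraph α} {s : Finset α} {b b' : α → Bool}
    (h : ∀ a ∈ s, b a = b' a) : T.uniformNbhd s b = T.uniformNbhd s b' := by
  ext c
  simp +contextual [uniformNbhd, h]

end

variable [Fintype V]

noncomputable def forbiddenColors (H : SimpleGraph V) (C : Finset V) (f : V → α) (v : V) :
    Finset α :=
  ((H.neighborFinset v).filter (· ∉ C)).biUnion fun x =>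
    ((H.neighborFinset x).filter (· ∈ C)).image f

theorem card_forbiddenColors_le {H : SimpleGraph V} {Δ : ℕ}
    (hdeg : ∀ v, #(H.neighborFinset v) ≤ Δ) {C : Finset V} (f : V → α) {v : V} (hv : v ∉ C) :
    #(forbiddenColors H C f v) ≤ (Δ - #((H.neighborFinset v).filter (· ∈ C))) * (Δ - 1) := by
  have hx : ∀ x ∈ (H.neighborFinset v).filter (· ∉ C),
      #(((H.neighborFinset x).filter (· ∈ C)).image f) ≤ Δ - 1 := by
    intro x hx
    have hvx : v ∈ H.neighborFinset x := by
      simpa [SimpleGraph.adj_comm] using (mem_filter.1 hx).1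
    calc #(((H.neighborFinset x).filter (· ∈ C)).image f)
        ≤ #((H.neighborFinset x).erase v) := card_image_le.trans (card_le_card fun w hw => by
          rw [mem_filter] at hw
          exact mem_erase.2 ⟨ne_of_mem_of_not_mem hw.2 hv, hw.1⟩)
      _ ≤ Δ - 1 := by rw [card_erase_of_mem hvx]; exact Nat.sub_le_sub_right (hdeg x) 1
  have hsplit := card_filter_add_card_filter_not (s := H.neighborFinset v) (· ∈ C)
  refine (card_biUnion_le_card_mul _ _ _ hx).trans (Nat.mul_le_mul_right _ ?_)
  have := hdeg v
  omega

theorem injOn_update_of_notMem_forbiddenColors {H : SimpleGraph V} {C : Finset V} {f : V → α}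
    {v : V} (hv : v ∉ C) {c : α} (hcF : c ∉ forbiddenColors H C f v) {x : V}
    (hx : x ∉ insert v C) (hinj : Set.InjOn f {w | w ∈ C ∧ H.Adj x w}) :
    Set.InjOn (Function.update f v c) {w | w ∈ insert v C ∧ H.Adj x w} := by
  rw [mem_insert, not_or] at hx
  have hf' : Set.EqOn (Function.update f v c) f {w | w ∈ C ∧ H.Adj x w} :=
    fun w hw => Function.update_of_ne (ne_of_mem_of_not_mem hw.1 hv) _ _
  replace hinj := hf'.injOn_iff.2 hinj
  by_cases hxv : H.Adj x v
  · have hset : {w | w ∈ insert v C ∧ H.Adj x w} = insert v {w | w ∈ C ∧ H.Adj x w} := by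
      ext w; by_cases hw : w = v <;> simp [hw, hxv]
    rw [hset, Set.injOn_insert fun h => hv h.1]
    refine ⟨hinj, fun ⟨w, hw, hfw⟩ => hcF ?_⟩
    rw [Function.update_self, hf' hw] at hfw
    simp only [forbiddenColors, mem_biUnion, mem_filter, mem_image,
      SimpleGraph.mem_neighborFinset]
    exact ⟨x, ⟨hxv.symm, hx.2⟩, w, ⟨hw.2, hw.1⟩, hfw⟩
  · refine Set.InjOn.mono (fun w hw => ?_) hinj
    rcases mem_insert.1 hw.1 with rfl | hwC
    · exact (hxv hw.2).elim
    · exact ⟨hwC, hw.2⟩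

/-- The second condition keeps the colours of the coloured neighbours of an uncoloured vertex
distinct, so that they form a set of the right size when that vertex gets coloured. -/
def IsPartialPushHom (G : OrientedGraph V) (T : OrientedGraph α) (C : Finset V) (f : V → α)
    (S : Set V) : Prop :=
  (∀ u ∈ C, ∀ w ∈ C, (G.push S).adj u w → T.adj (f u) (f w)) ∧
    ∀ x ∉ C, Set.InjOn f {w | w ∈ C ∧ G.toSimpleGraph.Adj x w}

variable {G : OrientedGraph V} {T : OrientedGraph α} {Δ : ℕ}

theorem IsPartialPushHom.exists_color [Fintype α]
    (hdeg : ∀ v, #(G.toSimpleGraph.neighborFinset v) ≤ Δ)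
    (hT : T.HasLargeUniformNbhds Δ fun j => (Δ - j) * (Δ - 1)) {C : Finset V} {f : V → α}
    {S : Set V} (h : IsPartialPushHom G T C f S) {v : V} (hv : v ∉ C) :
    ∃ c ∉ forbiddenColors G.toSimpleGraph C f v, ∃ P : Prop, ∀ w ∈ C, G.toSimpleGraph.Adj v w →
      T.signedAdj (decide ((w ∈ S ↔ P) ↔ G.adj w v)) (f w) c := by
  set J := (G.toSimpleGraph.neighborFinset v).filter (· ∈ C)
  have hJ : Set.InjOn f J := (h.2 v hv).mono fun w hw => by
    simp only [J, coe_filter, SimpleGraph.mem_neighborFinset] at hw; exact ⟨hw.2, hw.1⟩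
  -- `b (f w)` is the direction the arc from `f w` to the new colour needs if `v` gets pushed;
  -- which of `b`, `!b` the colour `c` realises then decides whether `v` is pushed.
  let b : α → Bool := fun a => decide (∃ w ∈ J, f w = a ∧ (w ∈ S ↔ G.adj w v))
  have hb : ∀ w ∈ J, b (f w) = decide (w ∈ S ↔ G.adj w v) := fun w hw => by
    simp only [b, decide_eq_decide]
    exact ⟨fun ⟨w', hw', hfw, hS⟩ => hJ hw' hw hfw ▸ hS, fun hS => ⟨w, hw, rfl, hS⟩⟩
  have hcard : #(J.image f) = #J := card_image_of_injOn hJ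
  have hJΔ : #(J.image f) ≤ Δ := hcard ▸ (card_filter_le _ _).trans (hdeg v)
  obtain ⟨c, hc, hcF⟩ := exists_mem_notMem_of_card_lt_card
    ((card_forbiddenColors_le hdeg f hv).trans_lt (hcard ▸ hT _ b hJΔ))
  set P : Prop := ∀ a ∈ J.image f, T.signedAdj (b a) a c
  refine ⟨c, hcF, P, fun w hw hvw => ?_⟩
  have hwJ : w ∈ J := by simp [J, hw, hvw]
  simp only [uniformNbhd, mem_filter, mem_univ, true_and] at hc
  by_cases hP : P
  · convert hP _ (mem_image_of_mem f hwJ) using 2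
    rw [hb w hwJ]; simp [hP]
  · convert hc.resolve_left hP _ (mem_image_of_mem f hwJ) using 2
    rw [hb w hwJ]; by_cases hS : w ∈ S <;> simp [hP, hS]

theorem IsPartialPushHom.extend {C : Finset V} {f : V → α} {S : Set V}
    (h : IsPartialPushHom G T C f S) {v : V} (hv : v ∉ C) {c : α}
    (hcF : c ∉ forbiddenColors G.toSimpleGraph C f v) {P : Prop}
    (hc : ∀ w ∈ C, G.toSimpleGraph.Adj v w →
      T.signedAdj (decide ((w ∈ S ↔ P) ↔ G.adj w v)) (f w) c) :
    IsPartialPushHom G T (insert v C) (Function.update f v c) {x | x = v ∧ P ∨ x ≠ v ∧ x ∈ S} := by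
  set S' : Set V := {x | x = v ∧ P ∨ x ≠ v ∧ x ∈ S}
  have hS'v : v ∈ S' ↔ P := by simp [S']
  have hS' : ∀ x ≠ v, (x ∈ S ↔ x ∈ S') := fun x hx => by simp [S', hx]
  have hf' : ∀ w ∈ C, Function.update f v c w = f w :=
    fun w hw => Function.update_of_ne (ne_of_mem_of_not_mem hw hv) _ _
  have hnew : ∀ w ∈ C, G.toSimpleGraph.Adj v w →
      ((G.push S').adj w v → T.adj (f w) c) ∧ ((G.push S').adj v w → T.adj c (f w)) := by
    intro w hw hvw
    have hG := signedAdj_push S' hvw.symm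
    simp only [← hS' w (ne_of_mem_of_not_mem hw hv), hS'v] at hG
    exact adj_of_signedAdj hG (hc w hw hvw)
  constructor
  · intro u hu w hw huw
    have hadj : G.toSimpleGraph.Adj u w := toSimpleGraph_push G S' ▸ Or.inl huw
    rcases mem_insert.1 hu with rfl | huC <;> rcases mem_insert.1 hw with rfl | hwC
    · exact ((G.push S').irrefl' _ huw).elim
    · rw [Function.update_self, hf' w hwC]; exact (hnew w hwC hadj).2 huw
    · rw [Function.update_self, hf' u huC]; exact (hnew u huC hadj.symm).1 huw
    · rw [hf' u huC, hf' w hwC]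
      exact h.1 u huC w hwC ((G.push_adj_congr (hS' u (ne_of_mem_of_not_mem huC hv))
        (hS' w (ne_of_mem_of_not_mem hwC hv))).2 huw)
  · exact fun x hx => injOn_update_of_notMem_forbiddenColors hv hcF hx
      (h.2 x fun hxC => hx (mem_insert_of_mem hxC))

theorem exists_isPushableHom [Fintype α] (hdeg : ∀ v, #(G.toSimpleGraph.neighborFinset v) ≤ Δ)
    (hT : T.HasLargeUniformNbhds Δ fun j => (Δ - j) * (Δ - 1)) :
    ∃ f : V → α, IsPushableHom G T f := by
  have : Nonempty α := by
    obtain ⟨c, -⟩ := card_pos.1 ((Nat.zero_le _).trans_lt (hT ∅ (fun _ => true) (by simp)))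
    exact ⟨c⟩
  have hC : ∀ C : Finset V, ∃ f S, IsPartialPushHom G T C f S := by
    intro C
    induction C using Finset.induction_on with
    | empty => exact ⟨fun _ => Classical.arbitrary α, ∅, by simp [IsPartialPushHom]⟩
    | insert v C hv ih =>
      obtain ⟨f, S, h⟩ := ih
      obtain ⟨c, hcF, P, hc⟩ := h.exists_color hdeg hT hv
      exact ⟨_, _, h.extend hv hcF hc⟩
  obtain ⟨f, S, h⟩ := hC univ
  exact ⟨f, S, fun u w huw => h.1 u (mem_univ u) w (mem_univ w) huw⟩

end OrientedGraph

open OrientedGraph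

/-- The number of choices of a `j`-set `s`, a sign pattern `b` on `s`, an `e`-set `F` outside `s`,
and a matrix `t` such that no vertex of `F` is uniform for `(s, b)` in `bitTournament t`. -/
def badCount (m j e : ℕ) : ℕ :=
  m.choose j * 2 ^ j * (m - j).choose e * (2 ^ j - 2) ^ e * 2 ^ (m * m - j * e)

section BitTournament

variable {α : Type*} [LinearOrder α]

/-- Both entries `t u w` and `t w u` enter, so that fixing all entries outside `s ×ˢ F` makes the
arcs from `s` to `F` a bijective image of the entries in `s ×ˢ F`. -/
def arcBit (t : α → α → Bool) (u w : α) : Bool := xor (xor (t u w) (t w u)) (decide (u < w))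

theorem arcBit_swap (t : α → α → Bool) {u w : α} (h : u ≠ w) : arcBit t w u = !arcBit t u w := by
  rcases h.lt_or_gt with h | h <;> simp [arcBit, h, h.not_gt, Bool.xor_comm (t w u)]

def bitTournament (t : α → α → Bool) : OrientedGraph α where
  adj u w := u ≠ w ∧ arcBit t u w = true
  irrefl' _ h := h.1 rfl
  asymm' u w h h' := by rw [arcBit_swap t h.1, h.2] at h'; simp at h'

theorem signedAdj_bitTournament {t : α → α → Bool} {β : Bool} {u w : α} (h : u ≠ w) :
    (bitTournament t).signedAdj β u w ↔ arcBit t u w = β := by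
  cases β <;> simp [signedAdj, bitTournament, h, h.symm, arcBit_swap t h]

variable [Fintype α]

theorem mem_uniformNbhd_bitTournament {t : α → α → Bool} {s : Finset α} {b : α → Bool} {w : α}
    (hw : w ∉ s) : w ∈ (bitTournament t).uniformNbhd s b ↔
      (∀ u ∈ s, arcBit t u w = b u) ∨ ∀ u ∈ s, arcBit t u w = !b u := by
  have hne : ∀ u ∈ s, u ≠ w := fun u hu => ne_of_mem_of_not_mem hu hw
  simp only [uniformNbhd, mem_filter, mem_univ, true_and]
  exact or_congr (forall₂_congr fun u hu => signedAdj_bitTournament (hne u hu))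
    (forall₂_congr fun u hu => signedAdj_bitTournament (hne u hu))

noncomputable def nonuniformMatrices (s : Finset α) (b : α → Bool) (F : Finset α) :
    Finset (α → α → Bool) :=
  {t | ∀ w ∈ F, w ∉ (bitTournament t).uniformNbhd s b}

theorem card_nonuniformMatrices_le {s F : Finset α} (b : α → Bool) (hs : s.Nonempty)
    (hF : Disjoint s F) : #(nonuniformMatrices s b F)
      ≤ (2 ^ #s - 2) ^ #F * 2 ^ (Fintype.card α * Fintype.card α - #s * #F) := by
  set B₁ : s → Bool := fun u => b u
  set B₂ : s → Bool := fun u => !b u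
  have hB : B₁ ≠ B₂ := by
    obtain ⟨u, hu⟩ := hs
    intro h
    simpa [B₁, B₂] using congrFun h ⟨u, hu⟩
  let target : Finset ((F → s → Bool) × ({p : α × α // p ∉ s ×ˢ F} → Bool)) :=
    Fintype.piFinset (fun _ => univ \ {B₁, B₂}) ×ˢ univ
  have hcard : #target = (2 ^ #s - 2) ^ #F * 2 ^ (Fintype.card α * Fintype.card α - #s * #F) := by
    rw [card_product, Fintype.card_piFinset, prod_const, card_univ_sdiff, card_pair hB]
    simp only [card_univ, Fintype.card_fun, Fintype.card_bool, Fintype.card_coe,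
      Fintype.card_subtype_compl, card_product, Fintype.card_prod]
  rw [← hcard]
  refine card_le_card_of_injOn (fun t => (fun w u => arcBit t u w, fun p => t p.1.1 p.1.2)) ?_ ?_
  · intro t ht
    simp only [nonuniformMatrices, coe_filter, mem_univ, true_and, Set.mem_ofPred_eq] at ht
    simp only [target, coe_product, Set.mem_prod, mem_coe, Fintype.mem_piFinset, mem_sdiff,
      mem_univ, true_and, mem_insert, mem_singleton, and_true, not_or]
    intro w
    have hw := ht w w.2
    rw [mem_uniformNbhd_bitTournament (disjoint_right.1 hF w.2)] at hw
    push Not at hw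
    obtain ⟨⟨u₁, hu₁, h₁⟩, ⟨u₂, hu₂, h₂⟩⟩ := hw
    exact ⟨fun h => h₁ (congrFun h ⟨u₁, hu₁⟩), fun h => h₂ (congrFun h ⟨u₂, hu₂⟩)⟩
  · intro t₁ _ t₂ _ h
    simp only [Prod.mk.injEq] at h
    obtain ⟨h₁, h₂⟩ := h
    funext u w
    by_cases hp : (u, w) ∈ s ×ˢ F
    · rw [mem_product] at hp
      have hp' : (w, u) ∉ s ×ˢ F := fun h => disjoint_left.1 hF (mem_product.1 h).1 hp.2
      have e₁ := congrFun (congrFun h₁ ⟨w, hp.2⟩) ⟨u, hp.1⟩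
      have e₂ : t₁ w u = t₂ w u := congrFun h₂ ⟨(w, u), hp'⟩
      simpa [arcBit, e₂] using e₁
    · exact congrFun h₂ ⟨(u, w), hp⟩

noncomputable def signPatterns (s : Finset α) : Finset (α → Bool) :=
  Fintype.piFinset fun u => if u ∈ s then univ else {true}

theorem card_signPatterns (s : Finset α) : #(signPatterns s) = 2 ^ #s := by
  simp [signPatterns, Fintype.card_piFinset, apply_ite, prod_ite_mem]

noncomputable def nonuniformCover (Δ : ℕ) (k : ℕ → ℕ) : Finset (α → α → Bool) :=
  (Icc 1 Δ).biUnion fun j => (powersetCard j univ).biUnion fun s => (signPatterns s).biUnion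
    fun b => (powersetCard (Fintype.card α - j - k j) (univ \ s)).biUnion
      fun F => nonuniformMatrices s b F

theorem card_nonuniformCover_le (Δ : ℕ) (k : ℕ → ℕ) : #(nonuniformCover (α := α) Δ k)
    ≤ ∑ j ∈ Icc 1 Δ, badCount (Fintype.card α) j (Fintype.card α - j - k j) := by
  refine card_biUnion_le.trans (sum_le_sum fun j hj => ?_)
  set m := Fintype.card α
  set e := m - j - k j
  have hj1 : 1 ≤ j := (mem_Icc.1 hj).1
  calc _ ≤ #(powersetCard j (univ : Finset α))
          * (2 ^ j * ((m - j).choose e * ((2 ^ j - 2) ^ e * 2 ^ (m * m - j * e)))) := by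
        refine card_biUnion_le_card_mul _ _ _ fun s hs => ?_
        have hsj := (mem_powersetCard.1 hs).2
        refine (card_biUnion_le_card_mul _ _ _ fun b _ => ?_).trans_eq
          (by rw [card_signPatterns, hsj])
        refine (card_biUnion_le_card_mul _ _ _ fun F hF => ?_).trans_eq
          (by rw [card_powersetCard, card_univ_sdiff, hsj])
        obtain ⟨hFs, hFe⟩ := mem_powersetCard.1 hF
        have := card_nonuniformMatrices_le b (card_pos.1 (by omega))
          (disjoint_of_subset_right hFs disjoint_sdiff)
        rwa [hsj, hFe] at this
    _ = badCount m j e := by rw [card_powersetCard, card_univ, badCount]; ring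

theorem mem_nonuniformCover {Δ : ℕ} {k : ℕ → ℕ} (hk0 : k 0 < Fintype.card α)
    {t : α → α → Bool} {s : Finset α} {b : α → Bool} (hs : #s ≤ Δ)
    (ht : #((bitTournament t).uniformNbhd s b) ≤ k #s) : t ∈ nonuniformCover Δ k := by
  have hs0 : s.Nonempty := by
    rw [nonempty_iff_ne_empty]
    rintro rfl
    simp [uniformNbhd] at ht
    omega
  set b' : α → Bool := fun u => if u ∈ s then b u else true
  have hb' : (bitTournament t).uniformNbhd s b' = (bitTournament t).uniformNbhd s b :=
    uniformNbhd_congr fun a ha => if_pos ha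
  have hN : Fintype.card α - #s - k #s ≤ #((univ \ s) \ (bitTournament t).uniformNbhd s b) := by
    have := le_card_sdiff ((bitTournament t).uniformNbhd s b) (univ \ s)
    rw [card_univ_sdiff] at this
    omega
  obtain ⟨F, hFN, hF⟩ := exists_subset_card_eq hN
  simp only [nonuniformCover, mem_biUnion]
  refine ⟨#s, mem_Icc.2 ⟨card_pos.2 hs0, hs⟩, s, mem_powersetCard.2 ⟨subset_univ _, rfl⟩, b', ?_,
    F, mem_powersetCard.2 ⟨hFN.trans sdiff_subset, hF⟩, ?_⟩
  · simp only [signPatterns, Fintype.mem_piFinset, b']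
    intro u
    split_ifs <;> simp
  · simp only [nonuniformMatrices, mem_filter, mem_univ, true_and, hb']
    exact fun w hw => (mem_sdiff.1 (hFN hw)).2

theorem exists_hasLargeUniformNbhds {Δ : ℕ} {k : ℕ → ℕ} (hk0 : k 0 < Fintype.card α)
    (hsum : ∑ j ∈ Icc 1 Δ, badCount (Fintype.card α) j (Fintype.card α - j - k j)
      < 2 ^ (Fintype.card α * Fintype.card α)) :
    ∃ t : α → α → Bool, (bitTournament t).HasLargeUniformNbhds Δ k := by
  have hlt : #(nonuniformCover (α := α) Δ k) < #(univ : Finset (α → α → Bool)) := by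
    rw [card_univ, Fintype.card_fun, Fintype.card_fun, Fintype.card_bool, ← pow_mul]
    exact (card_nonuniformCover_le Δ k).trans_lt hsum
  obtain ⟨t, -, ht⟩ := exists_mem_notMem_of_card_lt_card hlt
  exact ⟨t, fun s b hs => not_le.1 fun h => ht (mem_nonuniformCover hk0 hs h)⟩

end BitTournament

section Estimates

open Real

theorem log_le_div_twenty_add_two {x : ℝ} (hx : 0 < x) : log x ≤ x / 20 + 2 := by
  have h20 : log 20 ≤ 3 := by
    rw [log_le_iff_le_exp (by norm_num)]
    calc (20 : ℝ) ≤ 2.7182818283 ^ 3 := by norm_num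
      _ ≤ exp 1 ^ 3 := by gcongr; exact exp_one_gt_d9.le
      _ = exp 3 := by rw [← exp_nat_mul]; norm_num
  have := log_le_sub_one_of_pos (show 0 < x / 20 by positivity)
  rw [log_div hx.ne' (by norm_num)] at this
  linarith

theorem mul_log_sub_le_log_factorial (n : ℕ) : n * log n - n ≤ log (n ! : ℝ) := by
  rcases n.eq_zero_or_pos with rfl | hn
  · simp
  have := Stirling.le_log_factorial_stirling hn.ne'
  have h1 : 0 ≤ log (n : ℝ) := log_natCast_nonneg n
  have h2 : 0 ≤ log (2 * π) := log_nonneg (by linarith [pi_gt_three])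
  linarith

theorem log_choose_le {n r : ℕ} (h : r ≤ n) :
    log (n.choose r : ℝ) ≤ r * log n - log (r ! : ℝ) := by
  rcases n.eq_zero_or_pos with rfl | hn
  · simp [Nat.le_zero.1 h]
  calc log (n.choose r : ℝ) ≤ log ((n : ℝ) ^ r / r !) :=
        log_le_log (by exact_mod_cast Nat.choose_pos h) (Nat.choose_le_pow_div r n)
    _ = r * log n - log (r ! : ℝ) := by
        rw [log_div (by positivity) (by positivity), Real.log_pow]

theorem log_two_lt_seven_tenths : log 2 < 0.7 := log_two_lt_d9.trans (by norm_num)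

def tournamentSize (Δ : ℕ) : ℕ := (Δ - 3) * (Δ - 1) * 2 ^ (Δ - 1)

variable {Δ : ℕ}

theorem cast_tournamentSize (hΔ : 3 ≤ Δ) :
    (tournamentSize Δ : ℝ) = ((Δ : ℝ) - 3) * (Δ - 1) * 2 ^ (Δ - 1) := by
  simp [tournamentSize, Nat.cast_sub (by omega : 3 ≤ Δ), Nat.cast_sub (by omega : 1 ≤ Δ)]

theorem log_tournamentSize_le (hΔ : 4 ≤ Δ) :
    log (tournamentSize Δ) ≤ (Δ - 1) * log 2 + 2 * log Δ := by
  have hx : (4 : ℝ) ≤ Δ := by exact_mod_cast hΔ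
  rw [cast_tournamentSize (by omega), log_mul (by nlinarith) (by positivity),
    log_mul (by linarith) (by linarith), Real.log_pow, Nat.cast_sub (by omega)]
  have h3 := log_le_log (by linarith) (show (Δ : ℝ) - 3 ≤ Δ by linarith)
  have h1 := log_le_log (by linarith) (show (Δ : ℝ) - 1 ≤ Δ by linarith)
  push_cast
  linarith

theorem two_div_two_pow_mul_tournamentSize {j : ℕ} (hj : j ≤ Δ) (hΔ : 3 ≤ Δ) :
    2 / 2 ^ j * (tournamentSize Δ : ℝ) = 2 ^ (Δ - j) * (((Δ : ℝ) - 3) * (Δ - 1)) := by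
  have h : (2 : ℝ) * 2 ^ (Δ - 1) = 2 ^ j * 2 ^ (Δ - j) := by
    rw [← pow_succ', ← pow_add]; congr 1; omega
  rw [cast_tournamentSize hΔ, div_mul_eq_mul_div, div_eq_iff (by positivity)]
  linear_combination ((Δ : ℝ) - 3) * (Δ - 1) * h

theorem four_mul_le_two_pow {n : ℕ} (hn : 4 ≤ n) : 4 * n ≤ 2 ^ n := by
  induction n, hn using Nat.le_induction with
  | base => norm_num
  | succ n hn ih => rw [pow_succ]; omega

theorem log_term_le_of_eq_self (hΔ : 29 ≤ Δ) :
    Δ * log (tournamentSize Δ) + Δ * log 2 + log (2 * Δ)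
      ≤ log (Δ ! : ℝ) + 2 / 2 ^ Δ * (tournamentSize Δ - Δ) := by
  have hx : (29 : ℝ) ≤ Δ := by exact_mod_cast hΔ
  have hM := mul_le_mul_of_nonneg_left (log_tournamentSize_le (by omega : 4 ≤ Δ))
    (by linarith : (0 : ℝ) ≤ Δ)
  have hl := mul_le_mul_of_nonneg_left (log_le_div_twenty_add_two (by linarith : (0 : ℝ) < Δ))
    (by linarith : (0 : ℝ) ≤ Δ + 1)
  have ha := log_two_lt_seven_tenths
  have ha' := mul_le_mul_of_nonneg_left ha.le (sq_nonneg (Δ : ℝ))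
  have hfac := mul_log_sub_le_log_factorial Δ
  have htail : 2 / 2 ^ Δ * (Δ : ℝ) ≤ 1 := by
    rw [div_mul_eq_mul_div, div_le_one (by positivity)]
    exact_mod_cast (Nat.mul_le_mul_right Δ (by norm_num : 2 ≤ 4)).trans
      (four_mul_le_two_pow (by omega))
  rw [mul_sub, two_div_two_pow_mul_tournamentSize le_rfl (by omega), Nat.sub_self, pow_zero,
    log_mul two_ne_zero (by positivity)]
  nlinarith

theorem log_term_le_of_eq_pred (hΔ : 29 ≤ Δ) :
    ((Δ - 1 : ℕ) + (Δ - 1 : ℕ)) * log (tournamentSize Δ) + (Δ - 1 : ℕ) * log 2 + log (2 * Δ)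
      ≤ log ((Δ - 1) ! : ℝ) + log ((Δ - 1) ! : ℝ)
        + 2 / 2 ^ (Δ - 1) * (tournamentSize Δ - (Δ - 1 : ℕ) - (Δ - 1 : ℕ)) := by
  have hx : (29 : ℝ) ≤ Δ := by exact_mod_cast hΔ
  have hy : ((Δ - 1 : ℕ) : ℝ) = Δ - 1 := by rw [Nat.cast_sub (by omega), Nat.cast_one]
  have hfac := mul_log_sub_le_log_factorial (Δ - 1)
  rw [sub_sub, mul_sub, two_div_two_pow_mul_tournamentSize (by omega) (by omega),
    show Δ - (Δ - 1) = 1 by omega, log_mul two_ne_zero (by positivity)]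
  rw [hy] at hfac ⊢
  have hlog_pred : log Δ - 1 / 28 ≤ log ((Δ : ℝ) - 1) := by
    have h := log_le_sub_one_of_pos (show (0 : ℝ) < Δ / (Δ - 1) by
      exact div_pos (by linarith) (by linarith))
    rw [log_div (by linarith) (by linarith), div_sub_one (by linarith), sub_sub_cancel] at h
    have : 1 / ((Δ : ℝ) - 1) ≤ 1 / 28 := one_div_le_one_div_of_le (by norm_num) (by linarith)
    linarith
  have hM := mul_le_mul_of_nonneg_left (log_tournamentSize_le (by omega : 4 ≤ Δ))
    (by linarith : (0 : ℝ) ≤ 2 * (Δ - 1))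
  have hl := mul_le_mul_of_nonneg_left (log_le_div_twenty_add_two (by linarith : (0 : ℝ) < Δ))
    (by linarith : (0 : ℝ) ≤ 2 * (Δ - 1) + 1)
  have hlp := mul_le_mul_of_nonneg_left hlog_pred (by linarith : (0 : ℝ) ≤ Δ - 1)
  have ha := log_two_lt_seven_tenths
  have ha' := mul_le_mul_of_nonneg_left ha.le (sq_nonneg ((Δ : ℝ) - 1))
  have ha'' := mul_le_mul_of_nonneg_left ha.le (by linarith : (0 : ℝ) ≤ Δ)
  have htail : 2 / 2 ^ (Δ - 1) * ((Δ : ℝ) - 1 + (Δ - 1)) ≤ 1 := by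
    rw [div_mul_eq_mul_div, div_le_one (by positivity), ← hy]
    exact_mod_cast (by omega : 2 * ((Δ - 1) + (Δ - 1)) = 4 * (Δ - 1)).le.trans
      (four_mul_le_two_pow (by omega))
  nlinarith

theorem middle_range_estimate {x s ℓ a l P : ℝ} (hx : 29 ≤ x) (hs : 2 ≤ s) (hℓ : 0 ≤ ℓ)
    (hℓ' : ℓ ≤ (x - 1) * a + 2 * l) (ha : 0 ≤ a) (ha' : a < 0.7) (hl : 0 ≤ l)
    (hl' : l ≤ x / 20 + 2) (hP : 4 * (s - 1) ≤ P) :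
    (x - s + s * (x - 1)) * (ℓ + 1) + (x - s) * a + (a + l) ≤ P * ((x - 3) * (x - 1)) := by
  have hcore : 3 * (x - 1) * (ℓ + 1) + (x + 1) * a + l ≤ 4 * ((x - 3) * (x - 1)) := by
    have h1 := mul_le_mul_of_nonneg_left hℓ' (by linarith : 0 ≤ 3 * (x - 1))
    have h2 := mul_le_mul_of_nonneg_left ha'.le (sq_nonneg (x - 1))
    have h3 := mul_le_mul_of_nonneg_left hl' (by linarith : 0 ≤ 6 * (x - 1) + 1)
    have h4 := mul_le_mul_of_nonneg_left ha'.le (by linarith : 0 ≤ x + 1)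
    nlinarith
  have hN : (x - s + s * (x - 1)) * (ℓ + 1) ≤ 3 * (s - 1) * (x - 1) * (ℓ + 1) :=
    mul_le_mul_of_nonneg_right (by nlinarith) (by linarith)
  have hscale := mul_le_mul_of_nonneg_left hcore (by linarith : 0 ≤ s - 1)
  have hc : (x + 1) * a + l ≤ (s - 1) * ((x + 1) * a + l) :=
    le_mul_of_one_le_left (by positivity) (by linarith)
  have hP' := mul_le_mul_of_nonneg_right hP (by nlinarith : 0 ≤ (x - 3) * (x - 1))
  have hsa : 0 ≤ s * a := by positivity
  linarith

theorem log_term_le_of_add_two_le (hΔ : 29 ≤ Δ) {j : ℕ} (hj : 2 ≤ j) (hjΔ : j + 2 ≤ Δ) :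
    (j + ((Δ - j) * (Δ - 1) : ℕ)) * log (tournamentSize Δ) + j * log 2 + log (2 * Δ)
      ≤ log (j ! : ℝ) + log (((Δ - j) * (Δ - 1)) ! : ℝ)
        + 2 / 2 ^ j * (tournamentSize Δ - j - ((Δ - j) * (Δ - 1) : ℕ)) := by
  have hx : (29 : ℝ) ≤ Δ := by exact_mod_cast hΔ
  have hpow : 4 * (((Δ - j : ℕ) : ℝ) - 1) ≤ 2 ^ (Δ - j) := by
    have h1 := Nat.lt_two_pow_self (n := Δ - j - 2)
    have h2 : 2 ^ (Δ - j) = 2 ^ (Δ - j - 2) * 4 := by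
      rw [show 4 = 2 ^ 2 by rfl, ← pow_add]; congr 1; omega
    rw [← Nat.cast_pred (by omega)]
    exact_mod_cast (by omega : 4 * (Δ - j - 1) ≤ 2 ^ (Δ - j))
  have hK : (((Δ - j) * (Δ - 1) : ℕ) : ℝ) = (Δ - j : ℕ) * ((Δ : ℝ) - 1) := by
    rw [Nat.cast_mul, Nat.cast_sub (by omega : 1 ≤ Δ), Nat.cast_one]
  have hj' : (j : ℝ) = Δ - (Δ - j : ℕ) := by rw [Nat.cast_sub (by omega)]; ring
  have htail : 2 / 2 ^ j * ((j : ℝ) + ((Δ - j) * (Δ - 1) : ℕ))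
      ≤ j + ((Δ - j) * (Δ - 1) : ℕ) := by
    refine mul_le_of_le_one_left (by positivity) ?_
    rw [div_le_one (by positivity)]
    exact le_self_pow₀ (by norm_num) (by omega)
  have hest := middle_range_estimate hx (by exact_mod_cast (by omega : 2 ≤ Δ - j))
    (log_natCast_nonneg _) (log_tournamentSize_le (by omega)) (log_nonneg one_le_two)
    log_two_lt_seven_tenths (log_natCast_nonneg _)
    (log_le_div_twenty_add_two (by linarith)) hpow
  have hfac₁ : 0 ≤ log (j ! : ℝ) := log_natCast_nonneg _
  have hfac₂ : 0 ≤ log (((Δ - j) * (Δ - 1)) ! : ℝ) := log_natCast_nonneg _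
  rw [sub_sub, mul_sub, two_div_two_pow_mul_tournamentSize (by omega) (by omega),
    log_mul two_ne_zero (by positivity)]
  rw [hK, hj'] at htail ⊢
  linarith

/-- The logarithm of `2Δ · C(M, j) 2^j C(M - j, K) exp (-2 (M - j - K) / 2^j) ≤ 1`, where
`M = tournamentSize Δ` and `K = (Δ - j)(Δ - 1)`. -/
theorem log_term_le (hΔ : 29 ≤ Δ) {j : ℕ} (hj : 2 ≤ j) (hjΔ : j ≤ Δ) :
    (j + ((Δ - j) * (Δ - 1) : ℕ)) * log (tournamentSize Δ) + j * log 2 + log (2 * Δ)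
      ≤ log (j ! : ℝ) + log (((Δ - j) * (Δ - 1)) ! : ℝ)
        + 2 / 2 ^ j * (tournamentSize Δ - j - ((Δ - j) * (Δ - 1) : ℕ)) := by
  rcases (by omega : j = Δ ∨ j = Δ - 1 ∨ j + 2 ≤ Δ) with rfl | rfl | hj'
  · simpa using log_term_le_of_eq_self hΔ
  · simpa [show Δ - (Δ - 1) = 1 by omega] using log_term_le_of_eq_pred hΔ
  · exact log_term_le_of_add_two_le hΔ hj hj'

theorem add_mul_pred_le (hΔ : 2 ≤ Δ) {j : ℕ} (hjΔ : j ≤ Δ) :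
    j + (Δ - j) * (Δ - 1) ≤ Δ * (Δ - 1) := by
  calc j + (Δ - j) * (Δ - 1) ≤ j * (Δ - 1) + (Δ - j) * (Δ - 1) := by
        gcongr; exact Nat.le_mul_of_pos_right _ (by omega)
    _ = Δ * (Δ - 1) := by rw [← add_mul, Nat.add_sub_cancel' hjΔ]

theorem mul_pred_lt_tournamentSize (hΔ : 5 ≤ Δ) : Δ * (Δ - 1) < tournamentSize Δ := by
  have h1 : Δ < 2 ^ Δ := Nat.lt_two_pow_self
  have h2 : 2 ^ Δ = 2 * 2 ^ (Δ - 1) := by rw [← pow_succ']; congr 1; omega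
  have h3 : Δ < (Δ - 3) * 2 ^ (Δ - 1) := by
    have := Nat.mul_le_mul_right (2 ^ (Δ - 1)) (by omega : 2 ≤ Δ - 3)
    omega
  rw [tournamentSize, mul_right_comm]
  exact Nat.mul_lt_mul_of_pos_right h3 (by omega)

theorem two_mul_choose_mul_choose_mul_le_one (hΔ : 29 ≤ Δ) {j : ℕ} (hj : 2 ≤ j) (hjΔ : j ≤ Δ) :
    2 * Δ * ((tournamentSize Δ).choose j * 2 ^ j
      * (tournamentSize Δ - j).choose ((Δ - j) * (Δ - 1))
      * (1 - 2 / 2 ^ j) ^ (tournamentSize Δ - j - (Δ - j) * (Δ - 1)) : ℝ) ≤ 1 := by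
  set M := tournamentSize Δ
  set K := (Δ - j) * (Δ - 1)
  have hjK : j + K ≤ M :=
    (add_mul_pred_le (by omega) hjΔ).trans (mul_pred_lt_tournamentSize (by omega)).le
  have hq : 2 / 2 ^ j ≤ (1 / 2 : ℝ) := by
    rw [div_le_iff₀ (by positivity)]
    calc (2 : ℝ) = 1 / 2 * 2 ^ 2 := by norm_num
      _ ≤ 1 / 2 * 2 ^ j := by gcongr; norm_num
  have hq0 : (0 : ℝ) < 2 / 2 ^ j := by positivity
  have hE : ((M - j - K : ℕ) : ℝ) = M - j - K := by
    rw [Nat.cast_sub (by omega), Nat.cast_sub (by omega)]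
  have hchoose1 := log_choose_le (show j ≤ M by omega)
  have hchoose2 : log ((M - j).choose K : ℝ) ≤ K * log M - log (K ! : ℝ) :=
    (log_le_log (by exact_mod_cast Nat.choose_pos (by omega))
      (by exact_mod_cast Nat.choose_le_choose K (Nat.sub_le M j))).trans
      (log_choose_le (by omega))
  have hpow := mul_le_mul_of_nonneg_left
    (log_le_sub_one_of_pos (by linarith : (0 : ℝ) < 1 - 2 / 2 ^ j)) (Nat.cast_nonneg (M - j - K))
  have hkey : ((j : ℝ) + K) * log M + j * log 2 + (log 2 + log Δ)
      ≤ log (j ! : ℝ) + log (K ! : ℝ) + 2 / 2 ^ j * (M - j - K) := by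
    rw [← log_mul two_ne_zero (by positivity)]; exact log_term_le hΔ hj hjΔ
  have hpos : (0 : ℝ) < M.choose j := by exact_mod_cast Nat.choose_pos (by omega)
  have hpos' : (0 : ℝ) < (M - j).choose K := by exact_mod_cast Nat.choose_pos (by omega)
  set c : ℝ := 1 - 2 / 2 ^ j with hc
  have hc0 : 0 < c := by linarith
  rw [← log_nonpos_iff (by positivity), log_mul (by positivity) (by positivity),
    log_mul (by positivity) (by positivity), log_mul (by positivity) (by positivity),
    log_mul (by positivity) (by positivity), log_mul (by positivity) (by positivity),
    Real.log_pow, Real.log_pow]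
  rw [hE, hc] at hpow
  rw [hE]
  linarith

theorem two_mul_mul_badCount_le (hΔ : 29 ≤ Δ) {j : ℕ} (hj : 1 ≤ j) (hjΔ : j ≤ Δ) :
    2 * Δ * badCount (tournamentSize Δ) j (tournamentSize Δ - j - (Δ - j) * (Δ - 1))
      ≤ 2 ^ (tournamentSize Δ * tournamentSize Δ) := by
  set M := tournamentSize Δ
  set K := (Δ - j) * (Δ - 1)
  have hjK : j + K ≤ M :=
    (add_mul_pred_le (by omega) hjΔ).trans (mul_pred_lt_tournamentSize (by omega)).le
  rcases hj.eq_or_lt with rfl | hj2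
  · have hE : M - 1 - K ≠ 0 := by
      have := mul_pred_lt_tournamentSize (by omega : 5 ≤ Δ)
      have := add_mul_pred_le (by omega : 2 ≤ Δ) (show 1 ≤ Δ by omega)
      omega
    simp [badCount, zero_pow hE]
  have hjE : j * (M - j - K) ≤ M * M := Nat.mul_le_mul (by omega) (by omega)
  have hcast : (badCount M j (M - j - K) : ℝ) = 2 ^ (M * M) * ((M.choose j) * 2 ^ j
      * (M - j).choose K * (1 - 2 / 2 ^ j) ^ (M - j - K)) := by
    have h2j : (2 : ℝ) ^ j - 2 = 2 ^ j * (1 - 2 / 2 ^ j) := by field_simp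
    have hsplit : (2 : ℝ) ^ (M * M) = 2 ^ (j * (M - j - K)) * 2 ^ (M * M - j * (M - j - K)) := by
      rw [← pow_add, Nat.add_sub_cancel' hjE]
    rw [badCount, Nat.choose_symm (by omega)]
    push_cast [Nat.cast_sub (Nat.le_self_pow (by omega : j ≠ 0) 2)]
    rw [h2j, hsplit, mul_pow, pow_mul]
    ring
  have hle : 2 * Δ * ((M.choose j) * 2 ^ j * (M - j).choose K
      * (1 - 2 / 2 ^ j) ^ (M - j - K) : ℝ) ≤ 1 :=
    two_mul_choose_mul_choose_mul_le_one hΔ hj2 hjΔ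
  have h : ((2 * Δ * badCount M j (M - j - K) : ℕ) : ℝ) ≤ 2 ^ (M * M) := by
    push_cast
    rw [hcast, mul_left_comm]
    exact mul_le_of_le_one_right (by positivity) hle
  exact_mod_cast h

theorem sum_badCount_lt (hΔ : 29 ≤ Δ) :
    ∑ j ∈ Icc 1 Δ, badCount (tournamentSize Δ) j (tournamentSize Δ - j - (Δ - j) * (Δ - 1))
      < 2 ^ (tournamentSize Δ * tournamentSize Δ) := by
  refine Nat.lt_of_mul_lt_mul_left (a := 2 * Δ) ?_
  calc 2 * Δ * ∑ j ∈ Icc 1 Δ, _ = ∑ j ∈ Icc 1 Δ, 2 * Δ * _ := Finset.mul_sum _ _ _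
    _ ≤ ∑ j ∈ Icc 1 Δ, 2 ^ (tournamentSize Δ * tournamentSize Δ) :=
        Finset.sum_le_sum fun j hj => by
          rw [Finset.mem_Icc] at hj; exact two_mul_mul_badCount_le hΔ hj.1 hj.2
    _ = Δ * 2 ^ (tournamentSize Δ * tournamentSize Δ) := by simp
    _ < 2 * Δ * 2 ^ (tournamentSize Δ * tournamentSize Δ) := by
        gcongr; omega

end Estimates

theorem orientedChromatic_upper_of_maxDegree_general
    (Δ : ℕ) (hΔ : 29 ≤ Δ) (V : Type) [Fintype V] (G : SimpleGraph V)
    (hdeg : ∀ v, (G.neighborSet v).ncard ≤ Δ)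
    (G' : OrientedGraph V) (horient : G'.toSimpleGraph = G) :
    G'.orientedChromatic ≤ (Δ - 3) * (Δ - 1) * 2 ^ Δ + 2 := by
  obtain ⟨t, ht⟩ := exists_hasLargeUniformNbhds (α := Fin (tournamentSize Δ))
    (k := fun j => (Δ - j) * (Δ - 1))
    (by simpa using mul_pred_lt_tournamentSize (by omega)) (by simpa using sum_badCount_lt hΔ)
  have hdeg' : ∀ v, #(G'.toSimpleGraph.neighborFinset v) ≤ Δ := fun v => by
    rw [horient, SimpleGraph.neighborFinset_def, ← Set.ncard_eq_toFinset_card']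
    exact hdeg v
  obtain ⟨f, hf⟩ := exists_isPushableHom hdeg' ht
  have h2 : 2 ^ Δ = 2 * 2 ^ (Δ - 1) := by rw [← pow_succ']; congr 1; omega
  calc G'.orientedChromatic ≤ 2 * tournamentSize Δ := by
        simpa using hf.orientedChromatic_le
    _ = (Δ - 3) * (Δ - 1) * 2 ^ Δ := by rw [tournamentSize, h2]; ring
    _ ≤ (Δ - 3) * (Δ - 1) * 2 ^ Δ + 2 := Nat.le_add_right _ _

/-- For every `Δ ≥ 29`, every orientation of every connected finite simple graph with
maximum degree at most `Δ` has oriented chromatic number at most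
`(Δ-3)(Δ-1)·2^Δ + 2`. -/
theorem orientedChromatic_upper_of_maxDegree
    (Δ : ℕ) (hΔ : 29 ≤ Δ) (V : Type) [Fintype V] (G : SimpleGraph V)
    (hconn : G.Connected) (hdeg : ∀ v, (G.neighborSet v).ncard ≤ Δ)
    (G' : OrientedGraph V) (horient : G'.toSimpleGraph = G) :
    G'.orientedChromatic ≤ (Δ - 3) * (Δ - 1) * 2 ^ Δ + 2 :=
  orientedChromatic_upper_of_maxDegree_general Δ hΔ V G hdeg G' horient
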